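/- Let z be a vector in an inner product space, P an orthogonal projection, 0 < φ < 1, and c ≥ 0. If ‖P z‖ ≥ φ‖z‖ − c, then ‖(I − P) z‖ ≤ √(1 − φ²)·‖z‖ + (φ / √(1 − φ²))·c. -/

import Mathlib

open MeasureTheory ProbabilityTheory
open scoped Matrix

/-- Spectral (ℓ₂ operator) norm of a real matrix. -/
noncomputable def specNorm {m n : ℕ} (A : Matrix (Fin m) (Fin n) ℝ) : ℝ :=
  ‖LinearMap.toContinuousLinearMap (Matrix.toEuclideanLin A)‖

/-- Frobenius norm of a real matrix. -/
noncomputable def frobNorm {m n : ℕ} (A : Matrix (Fin m) (Fin n) ℝ) : ℝ :=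
  Real.sqrt (∑ i, ∑ j, (A i j)^2)

/-- Euclidean norm of a vector. -/
noncomputable def vecNorm {p : ℕ} (x : Fin p → ℝ) : ℝ := Real.sqrt (∑ i, (x i)^2)

/-- Max (ℓ∞) norm of a vector. -/
noncomputable def vecInf {p : ℕ} (x : Fin p → ℝ) : ℝ := ⨆ i, |x i|

/-- The standard Gaussian measure N(0, I_p) on ℝ^p. -/
noncomputable def stdGaussian (p : ℕ) : Measure (Fin p → ℝ) :=
  Measure.pi (fun _ => gaussianReal 0 1)

/-! The Pythagorean identity `‖z‖² = ‖P z‖² + ‖(I - P) z‖²` places `(‖P z‖, ‖(I - P) z‖)` on the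
circle of radius `‖z‖`, so Cauchy–Schwarz in `ℝ²` against the unit vector `(φ, √(1 - φ²))` gives
`√(1 - φ²) ‖(I - P) z‖ ≤ ‖z‖ - φ ‖P z‖ ≤ (1 - φ²) ‖z‖ + φ c`. -/

theorem mul_add_mul_le_of_sq_eq_sq_add_sq {φ s a r t : ℝ} (hφs : φ ^ 2 + s ^ 2 = 1)
    (ht : 0 ≤ t) (hpy : t ^ 2 = a ^ 2 + r ^ 2) : φ * a + s * r ≤ t :=
  le_of_sq_le_sq (by nlinarith [sq_nonneg (φ * r - s * a)]) ht

theorem le_sqrt_one_sub_sq_mul_add_of_sq_eq_sq_add_sq {φ c t a r : ℝ} (hφ : 0 ≤ φ) (hφ1 : φ < 1)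
    (ht : 0 ≤ t) (hpy : t ^ 2 = a ^ 2 + r ^ 2) (h : φ * t - c ≤ a) :
    r ≤ Real.sqrt (1 - φ ^ 2) * t + (φ / Real.sqrt (1 - φ ^ 2)) * c := by
  set s := Real.sqrt (1 - φ ^ 2)
  have hφ2 : 0 < 1 - φ ^ 2 := by nlinarith
  have hs : 0 < s := Real.sqrt_pos.2 hφ2
  have hs2 : s ^ 2 = 1 - φ ^ 2 := Real.sq_sqrt hφ2.le
  have hcs : φ * a + s * r ≤ t :=
    mul_add_mul_le_of_sq_eq_sq_add_sq (by rw [hs2]; ring) ht hpy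
  have hφa := mul_le_mul_of_nonneg_left h hφ
  refine le_of_mul_le_mul_left ?_ hs
  calc s * r ≤ s ^ 2 * t + φ * c := by rw [hs2]; linarith
    _ = s * (s * t + φ / s * c) := by field_simp

theorem Submodule.norm_sq_eq_norm_projection_sq_add_norm_sub_projection_sq {E : Type*}
    [NormedAddCommGroup E] [InnerProductSpace ℝ E] (V : Submodule ℝ E)
    [V.HasOrthogonalProjection] (z : E) :
    ‖z‖ ^ 2 = ‖(V.orthogonalProjectionOnto z : E)‖ ^ 2
      + ‖z - (V.orthogonalProjectionOnto z : E)‖ ^ 2 := by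
  simpa using V.norm_sq_eq_add_norm_sq_starProjection z

theorem residual_orthogonal_bound_general {E : Type*} [NormedAddCommGroup E]
    [InnerProductSpace ℝ E]
    (V : Submodule ℝ E) [V.HasOrthogonalProjection]
    (z : E) (φ c : ℝ) (hφ : 0 < φ) (hφ1 : φ < 1)
    (h : φ * ‖z‖ - c ≤ ‖(V.orthogonalProjectionOnto z : E)‖) :
    ‖z - (V.orthogonalProjectionOnto z : E)‖
      ≤ Real.sqrt (1 - φ^2) * ‖z‖ + (φ / Real.sqrt (1 - φ^2)) * c :=
  le_sqrt_one_sub_sq_mul_add_of_sq_eq_sq_add_sq hφ.le hφ1 (norm_nonneg z)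
    (V.norm_sq_eq_norm_projection_sq_add_norm_sub_projection_sq z) h

/-- If ‖P z‖ ≥ φ‖z‖ − c, then ‖(I − P)z‖ ≤ √(1−φ²)‖z‖ + (φ/√(1−φ²))·c. -/
theorem residual_orthogonal_bound {E : Type*} [NormedAddCommGroup E]
    [InnerProductSpace ℝ E] [CompleteSpace E]
    (V : Submodule ℝ E) [V.HasOrthogonalProjection]
    (z : E) (φ c : ℝ) (hφ : 0 < φ) (hφ1 : φ < 1) (hc : 0 ≤ c)
    (h : φ * ‖z‖ - c ≤ ‖(V.orthogonalProjectionOnto z : E)‖) :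
    ‖z - (V.orthogonalProjectionOnto z : E)‖
      ≤ Real.sqrt (1 - φ^2) * ‖z‖ + (φ / Real.sqrt (1 - φ^2)) * c :=
  residual_orthogonal_bound_general V z φ c hφ hφ1 h
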